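/- (Appell relation.) Let Δ = (𝔡₁,…,𝔡_d) be a system of delta operators on ℝ[x₁,…,x_d] with basic sequence (p_n)_{n∈ℕ^d}, let Z = (z_k)_{k∈ℕ^d} ⊆ ℝ^d be a grid, and let t_k(·;Z) be the associated delta Gončarov polynomials. In the ring of formal power series in new variables y₁,…,y_d with coefficients in ℝ[x₁,…,x_d], let G denote the series whose coefficient of yⁿ is p_n(x)/n!, and for u ∈ ℝ^d let G_u ∈ ℝ⟦y₁,…,y_d⟧ denote the series whose coefficient of yⁿ is p_n(u)/n!. Then G = ∑_{k∈ℕ^d} (t_k(x;Z)/k!)·yᵏ·G_{z_k}, where the right-hand side is the formal power series whose coefficient of yⁿ is the finite sum ∑_{k≤n} (t_k(x;Z)/k!)·(p_{n−k}(z_k)/(n−k)!). (With g the compositional inverse of the system of indicators of Δ, the left side represents e^{x·g(y)} and the right side represents ∑_k (t_k(x;Z)/k!)·yᵏ·e^{z_k·g(y)}.) -/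

import Mathlib

open MvPolynomial

noncomputable section

/-- The algebra of real polynomials in `d` variables `x₁, …, x_d`. -/
abbrev MvP (d : ℕ) := MvPolynomial (Fin d) ℝ

/-- The shift operator `E_v : p(x) ↦ p(x + v)`. -/
def shiftOp {d : ℕ} (v : Fin d → ℝ) : Module.End ℝ (MvP d) :=
  (MvPolynomial.aeval (fun i => X i + C (v i)) : MvP d →ₐ[ℝ] MvP d).toLinearMap

/-- A linear operator on `ℝ[x₁,…,x_d]` is shift-invariant if it commutes with
every shift operator. -/
def ShiftInv {d : ℕ} (L : Module.End ℝ (MvP d)) : Prop :=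
  ∀ v : Fin d → ℝ, L * shiftOp v = shiftOp v * L

/-- `(𝔡₁, …, 𝔡_d)` is a system of delta operators: each `𝔡_i` is shift-invariant,
each `𝔡_i` maps every homogeneous linear polynomial to a constant, and for a
nonzero homogeneous linear polynomial at least one `𝔡_i p` is nonzero. -/
def IsDeltaSystem {d : ℕ} (D : Fin d → Module.End ℝ (MvP d)) : Prop :=
  (∀ i, ShiftInv (D i)) ∧
  ∀ a : Fin d → ℝ,
    (∀ i, ∃ c : ℝ, D i (∑ j, C (a j) * X j) = C c) ∧
    ((∑ j, C (a j) * X j) ≠ 0 → ∃ i, D i (∑ j, C (a j) * X j) ≠ 0)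


/-- `𝔡^k = 𝔡₁^{k₁} ∘ ⋯ ∘ 𝔡_d^{k_d}`. -/
def dpow {d : ℕ} (D : Fin d → Module.End ℝ (MvP d)) (k : Fin d → ℕ) :
    Module.End ℝ (MvP d) :=
  (List.ofFn fun i => (D i) ^ (k i)).prod

/-- `(p_n)_{n ∈ ℕ^d}` is a basic sequence of the system `D`:
`deg p_n = |n|`, `p_0 = 1`, `p_n(0) = 0` for `|n| ≥ 1`, and
`𝔡_i p_n = n_i • p_{n - e_i}`. -/
def IsBasicSeq {d : ℕ} (D : Fin d → Module.End ℝ (MvP d))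
    (p : (Fin d → ℕ) → MvP d) : Prop :=
  (∀ n : Fin d → ℕ, (p n).totalDegree = ∑ i, n i) ∧
  p 0 = 1 ∧
  (∀ n : Fin d → ℕ, 1 ≤ ∑ i, n i → eval (0 : Fin d → ℝ) (p n) = 0) ∧
  ∀ (n : Fin d → ℕ) (i : Fin d), D i (p n) = (n i : ℝ) • p (n - Pi.single i 1)

/-- `Π_n(Δ)`: the span of the basic polynomials `p_k` with `k ≤ n`
(componentwise order). -/
def Pin {d : ℕ} (p : (Fin d → ℕ) → MvP d) (n : Fin d → ℕ) : Submodule ℝ (MvP d) :=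
  Submodule.span ℝ (p '' {k | k ≤ n})

/-- `n! = n₁! ⋯ n_d!` as a real number. -/
def natFact {d : ℕ} (n : Fin d → ℕ) : ℝ := ∏ i, (Nat.factorial (n i) : ℝ)

/-- `t` is the delta Gončarov polynomial `t_n(·;Z)` for the system `D` with
basic sequence `p` and grid `Z`: `t ∈ Π_n(Δ)` and
`(𝔡^k t)(z_k) = n!·δ_{k,n}` for all `k ≤ n`. -/
def IsGoncarov {d : ℕ} (D : Fin d → Module.End ℝ (MvP d))
    (p : (Fin d → ℕ) → MvP d) (Z : (Fin d → ℕ) → (Fin d → ℝ))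
    (n : Fin d → ℕ) (t : MvP d) : Prop :=
  t ∈ Pin p n ∧
  ∀ k ≤ n, eval (Z k) (dpow D k t) = if k = n then natFact n else 0

/-! The Gončarov functionals `q ↦ (𝔡^k q)(z_k)`, `k ≤ n`, are unitriangular on the basis
`(p_m)_{m ≤ n}` of `Π_n(Δ)`, because `𝔡^k p_m = (m!/(m-k)!) p_{m-k}` vanishes unless `k ≤ m`
and is the constant `m!` when `k = m`. Hence they separate the points of `Π_n(Δ)`, and since
they take the values `k! δ_{jk}` on the `t_k`, every `q ∈ Π_n(Δ)` expands as
`q = ∑_{k ≤ n} (𝔡^k q)(z_k)/k! · t_k`. For `q = p_n` the coefficients are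
`(n!/(n-k)!) p_{n-k}(z_k) / k!`. -/

section Goncarov

variable {d : ℕ} {D : Fin d → Module.End ℝ (MvP d)} {p : (Fin d → ℕ) → MvP d}
  {Z : (Fin d → ℕ) → Fin d → ℝ}

lemma natFact_ne_zero (n : Fin d → ℕ) : natFact n ≠ 0 :=
  Finset.prod_ne_zero_iff.2 fun i _ => Nat.cast_ne_zero.2 (Nat.factorial_ne_zero (n i))

lemma prod_descFactorial_self (n : Fin d → ℕ) :
    ∏ i, ((n i).descFactorial (n i) : ℝ) = natFact n := by
  simp only [Nat.descFactorial_self, natFact]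

lemma prod_descFactorial_eq_zero_of_not_le {k n : Fin d → ℕ} (h : ¬ k ≤ n) :
    ∏ i, ((n i).descFactorial (k i) : ℝ) = 0 := by
  obtain ⟨i, hi⟩ : ∃ i, n i < k i := by simpa [Pi.le_def] using h
  exact Finset.prod_eq_zero (Finset.mem_univ i) (by simp [Nat.descFactorial_eq_zero_iff_lt.2 hi])

lemma prod_descFactorial_mul_natFact_sub {k n : Fin d → ℕ} (h : k ≤ n) :
    (∏ i, ((n i).descFactorial (k i) : ℝ)) * natFact (n - k) = natFact n := by
  rw [natFact, natFact, ← Finset.prod_mul_distrib]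
  refine Finset.prod_congr rfl fun i _ => ?_
  rw [Pi.sub_apply, ← Nat.cast_mul, mul_comm, Nat.factorial_mul_descFactorial (h i)]

lemma Pin_mono {k n : Fin d → ℕ} (h : k ≤ n) : Pin p k ≤ Pin p n :=
  Submodule.span_mono (Set.image_mono fun _ hx => le_trans hx h)

lemma exists_eq_sum_of_mem_Pin {n : Fin d → ℕ} {q : MvP d} (hq : q ∈ Pin p n) :
    ∃ b : (Fin d → ℕ) → ℝ, ∑ m ∈ Finset.Iic n, b m • p m = q := by
  change q ∈ Submodule.span ℝ (p '' Set.Iic n) at hq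
  rw [← Finset.coe_Iic] at hq
  exact (Submodule.mem_span_image_finset_iff_exists_fun' ℝ).1 hq

namespace IsBasicSeq

lemma pow_apply (hp : IsBasicSeq D p) (i : Fin d) (m : ℕ) (n : Fin d → ℕ) :
    (D i ^ m) (p n) = ((n i).descFactorial m : ℝ) • p (n - Pi.single i m) := by
  induction m with
  | zero => simp
  | succ m ih =>
    rw [pow_succ', Module.End.mul_apply, ih, map_smul, hp.2.2.2, smul_smul, tsub_tsub,
      ← Pi.single_add, Nat.descFactorial_succ]
    simp [mul_comm]

lemma list_prod_apply (hp : IsBasicSeq D p) (k : Fin d → ℕ) {l : List (Fin d)} (hl : l.Nodup)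
    (n : Fin d → ℕ) :
    (l.map fun i => D i ^ k i).prod (p n) =
      (l.map fun i => ((n i).descFactorial (k i) : ℝ)).prod •
        p (n - fun x => if x ∈ l then k x else 0) := by
  induction l with
  | nil => simp [← Pi.zero_def]
  | cons i l ih =>
    obtain ⟨hi, hl⟩ := List.nodup_cons.1 hl
    have hsub : (n - fun x => if x ∈ l then k x else 0) - Pi.single i (k i) =
        n - fun x => if x ∈ i :: l then k x else 0 := by
      funext x
      by_cases hx : x = i
      · subst hx; simp [hi]
      · simp [hx]
    rw [List.map_cons, List.prod_cons, Module.End.mul_apply, ih hl, map_smul, pow_apply hp]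
    have hni : (n - fun x => if x ∈ l then k x else 0) i = n i := by simp [hi]
    rw [hni, hsub, smul_smul, List.map_cons, List.prod_cons, mul_comm]

lemma dpow_apply (hp : IsBasicSeq D p) (k n : Fin d → ℕ) :
    dpow D k (p n) = (∏ i, ((n i).descFactorial (k i) : ℝ)) • p (n - k) := by
  rw [dpow, List.ofFn_eq_map, list_prod_apply hp k (List.nodup_finRange d), ← List.ofFn_eq_map,
    List.prod_ofFn]
  simp only [List.mem_finRange, if_true]

lemma dpow_apply_self (hp : IsBasicSeq D p) (n : Fin d → ℕ) :
    dpow D n (p n) = C (natFact n) := by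
  rw [dpow_apply hp, prod_descFactorial_self, tsub_self, hp.2.1, smul_eq_C_mul, mul_one]

lemma dpow_eq_zero_of_not_le (hp : IsBasicSeq D p) {j k : Fin d → ℕ} (hjk : ¬ j ≤ k) :
    dpow D j (p k) = 0 := by
  rw [dpow_apply hp, prod_descFactorial_eq_zero_of_not_le hjk, zero_smul]

lemma dpow_eq_zero_of_mem_Pin (hp : IsBasicSeq D p) {j k : Fin d → ℕ} (hjk : ¬ j ≤ k)
    {q : MvP d} (hq : q ∈ Pin p k) : dpow D j q = 0 := by
  induction hq using Submodule.span_induction with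
  | mem x hx =>
    obtain ⟨m, hm, rfl⟩ := hx
    exact dpow_eq_zero_of_not_le hp fun h => hjk (h.trans hm)
  | zero => exact map_zero _
  | add x y _ _ hx hy => rw [map_add, hx, hy, add_zero]
  | smul c x _ hx => rw [map_smul, hx, smul_zero]

lemma eq_zero_of_mem_Pin (hp : IsBasicSeq D p) {n : Fin d → ℕ} {q : MvP d} (hq : q ∈ Pin p n)
    (hZ : ∀ j ≤ n, eval (Z j) (dpow D j q) = 0) : q = 0 := by
  obtain ⟨b, rfl⟩ := exists_eq_sum_of_mem_Pin hq
  by_contra hne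
  have hsupp : {m ∈ Finset.Iic n | b m ≠ 0}.Nonempty := by
    contrapose! hne
    refine Finset.sum_eq_zero fun m hm => ?_
    rw [Finset.filter_eq_empty_iff.1 hne hm |> not_not.1, zero_smul]
  obtain ⟨m, hm, hmax⟩ := Finset.exists_maximal hsupp
  obtain ⟨hmn, hbm⟩ := Finset.mem_filter.1 hm
  have hφ : eval (Z m) (dpow D m (∑ k ∈ Finset.Iic n, b k • p k)) = b m * natFact m := by
    rw [map_sum, map_sum, Finset.sum_eq_single m]
    · rw [map_smul, smul_eval, hp.dpow_apply_self, eval_C]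
    · intro k hk hkm
      rw [map_smul, smul_eval]
      by_cases hbk : b k = 0
      · rw [hbk, zero_mul]
      · have hmk : ¬ m ≤ k := fun h =>
          hkm (le_antisymm (hmax (Finset.mem_filter.2 ⟨hk, hbk⟩) h) h)
        rw [hp.dpow_eq_zero_of_not_le hmk, map_zero, mul_zero]
    · exact fun h => absurd hmn h
  exact mul_ne_zero hbm (natFact_ne_zero m) (hφ ▸ hZ m (Finset.mem_Iic.1 hmn))

end IsBasicSeq

lemma IsGoncarov.eval_dpow (hp : IsBasicSeq D p) {k : Fin d → ℕ} {t : MvP d}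
    (ht : IsGoncarov D p Z k t) (j : Fin d → ℕ) :
    eval (Z j) (dpow D j t) = if j = k then natFact k else 0 := by
  by_cases hjk : j ≤ k
  · exact ht.2 j hjk
  · rw [hp.dpow_eq_zero_of_mem_Pin hjk ht.1, map_zero, if_neg fun h => hjk h.le]

theorem IsBasicSeq.eq_sum_goncarov (hp : IsBasicSeq D p) {t : (Fin d → ℕ) → MvP d}
    (ht : ∀ k, IsGoncarov D p Z k (t k)) {n : Fin d → ℕ} {q : MvP d} (hq : q ∈ Pin p n) :
    q = ∑ k ∈ Finset.Iic n, (eval (Z k) (dpow D k q) / natFact k) • t k := by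
  have hmem : ∑ k ∈ Finset.Iic n, (eval (Z k) (dpow D k q) / natFact k) • t k ∈ Pin p n :=
    Submodule.sum_mem _ fun k hk =>
      Submodule.smul_mem _ _ (Pin_mono (Finset.mem_Iic.1 hk) (ht k).1)
  refine sub_eq_zero.1 <|
    hp.eq_zero_of_mem_Pin (Z := Z) (Submodule.sub_mem _ hq hmem) fun j hj => ?_
  simp only [map_sub, map_sum, map_smul, smul_eval, (ht _).eval_dpow hp, mul_ite, mul_zero,
    Finset.sum_ite_eq, Finset.mem_Iic.2 hj, if_true]
  rw [div_mul_cancel₀ _ (natFact_ne_zero j), sub_self]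

end Goncarov

theorem appell_relation_general {d : ℕ}
    (D : Fin d → Module.End ℝ (MvP d))
    (p : (Fin d → ℕ) → MvP d) (hp : IsBasicSeq D p)
    (Z : (Fin d → ℕ) → (Fin d → ℝ))
    (t : (Fin d → ℕ) → MvP d) (ht : ∀ k, IsGoncarov D p Z k (t k)) :
    ∀ n : Fin d → ℕ,
      (natFact n)⁻¹ • p n =
        ∑ k ∈ Finset.Iic n,
          (eval (Z k) (p (n - k)) / (natFact k * natFact (n - k))) • t k := by
  intro n
  rw [hp.eq_sum_goncarov ht (Submodule.subset_span ⟨n, le_refl n, rfl⟩ : p n ∈ Pin p n),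
    Finset.smul_sum]
  refine Finset.sum_congr rfl fun k hk => ?_
  have hfact := prod_descFactorial_mul_natFact_sub (Finset.mem_Iic.1 hk)
  have hprod : ∏ i, ((n i).descFactorial (k i) : ℝ) ≠ 0 :=
    left_ne_zero_of_mul (hfact ▸ natFact_ne_zero n)
  rw [smul_smul, hp.dpow_apply, smul_eval, ← hfact]
  congr 1
  field_simp [hprod, natFact_ne_zero k, natFact_ne_zero (n - k)]

/-- Appell relation: as formal power series in `y₁,…,y_d` with
coefficients in `ℝ[x₁,…,x_d]`, the series `G` with coefficient `p_n(x)/n!` of `yⁿ`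
equals `∑_k (t_k(x;Z)/k!)·yᵏ·G_{z_k}`; equivalently, for every `n` the coefficient
of `yⁿ` on the two sides agree:
`p_n(x)/n! = ∑_{k ≤ n} (p_{n-k}(z_k)/(k!·(n-k)!)) · t_k(x;Z)`. -/
theorem appell_relation {d : ℕ} (hd : 1 ≤ d)
    (D : Fin d → Module.End ℝ (MvP d)) (hD : IsDeltaSystem D)
    (p : (Fin d → ℕ) → MvP d) (hp : IsBasicSeq D p)
    (Z : (Fin d → ℕ) → (Fin d → ℝ))
    (t : (Fin d → ℕ) → MvP d) (ht : ∀ k, IsGoncarov D p Z k (t k)) :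
    ∀ n : Fin d → ℕ,
      (natFact n)⁻¹ • p n =
        ∑ k ∈ Finset.Iic n,
          (eval (Z k) (p (n - k)) / (natFact k * natFact (n - k))) • t k :=
  appell_relation_general D p hp Z t ht

end
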